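/- In the semigroup Q(a,b), every generator of the form [i_1, …, i_k, 0, i_{k+2}, …, i_{a+b−1}] (having a zero entry in position k+1) factors as [i_1,…,i_k,0,…,0] + [0,…,0,i_{k+2},…,i_{a+b−1}]; consequently, Q(a,b) is generated by the tuples that are unbroken strings of nonzero entries (padded by zeros), i.e., by the set Y_{a,b} ⊆ X_{a,b} of tuples whose nonzero entries form a consecutive block. -/

import Mathlib

/-!
Every slot pair of a tuple with a zero entry at `t` lies entirely on one side of `t`, which
gives the factorization slot by slot.

For generation, the boundary condition matches the nonzero right labels of each slot with the
nonzero left labels of the next one. Take a pair in the first nonzero slot of an element `x`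
of `Q(a,b)`; its left label is `0` unless that slot is the first one, since the slot before is
empty. Following its right label into the next slot, and so on until the label is `0` or the
slots run out, traces an unbroken string whose embedding is dominated by `x`. Removing it
leaves an element of `Q(a,b)` that is strictly smaller, and well-founded induction concludes.
-/

/-- The set of admissible tuples over `ℤ/mℤ` (endpoints in `{m, m-1} = {0, m-1}` mod `m`,
differences `{0,1}` then `{0,-1}`). -/
def Xab (m a b : ℕ) : Set (Fin (a + b - 1) → ZMod m) :=
  {i | ∃ h0 : 0 < a + b - 1, ∃ hl : a + b - 2 < a + b - 1,
    i ⟨0, h0⟩ ∈ ({0, ((m - 1 : ℕ) : ZMod m)} : Set (ZMod m)) ∧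
    i ⟨a + b - 2, hl⟩ ∈ ({0, ((m - 1 : ℕ) : ZMod m)} : Set (ZMod m)) ∧
    ∀ (k : ℕ) (hk : k + 1 < a + b - 1),
      (k < a - 1 → i ⟨k, by omega⟩ - i ⟨k + 1, hk⟩ ∈ ({0, 1} : Set (ZMod m))) ∧
      (a - 1 ≤ k → i ⟨k, by omega⟩ - i ⟨k + 1, hk⟩ ∈ ({0, -1} : Set (ZMod m)))}

/-- `Y_{a,b} ⊆ X_{a,b}`: the tuples whose nonzero entries form a consecutive block. -/
def Yab (m a b : ℕ) : Set (Fin (a + b - 1) → ZMod m) :=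
  {i ∈ Xab m a b | ∀ j k l : Fin (a + b - 1), j ≤ k → k ≤ l →
      i j ≠ 0 → i l ≠ 0 → i k ≠ 0}

/-- Ambient product of the free Pieri monoids at the internal vertices. -/
abbrev BigM (m a b : ℕ) := Fin (a + b - 2) → ((ZMod m × ZMod m) →₀ ℕ)

/-- Validity of a Pieri generator label at slot `s` (the label `(0,0)` is the identity
`[0,…,0]` of `Q(a,b)` and is excluded as a generator). -/
def validPairQ (m a b : ℕ) (s : ℕ) (p : ZMod m × ZMod m) : Prop :=
  p ≠ (0, 0) ∧
  (s < a - 1 → p.1 - p.2 ∈ ({0, 1} : Set (ZMod m))) ∧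
  (a - 1 ≤ s → p.1 - p.2 ∈ ({0, -1} : Set (ZMod m))) ∧
  (s = 0 → p.1 ∈ ({0, ((m - 1 : ℕ) : ZMod m)} : Set (ZMod m))) ∧
  (s = a + b - 3 → p.2 ∈ ({0, ((m - 1 : ℕ) : ZMod m)} : Set (ZMod m)))

/-- Boundary data of a slot element: the multiset of nonzero boundary labels extracted by
`f` (the trivial label `0` contributes nothing, since `[0,0]` is the identity). -/
noncomputable def qBoundary (m : ℕ) (f : ZMod m × ZMod m → ZMod m)
    (x : (ZMod m × ZMod m) →₀ ℕ) : ZMod m →₀ ℕ :=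
  x.sum (fun p c => if f p = 0 then 0 else Finsupp.single (f p) c)

/-- The embedding of a tuple as an element of `Q(a,b)`; a slot whose label is `(0,0)`
contributes the identity. -/
noncomputable def embQ (m a b : ℕ) (i : Fin (a + b - 1) → ZMod m) : BigM m a b :=
  fun s => match s with
  | ⟨sv, hs⟩ =>
      if (i ⟨sv, by omega⟩, i ⟨sv + 1, by omega⟩) = ((0 : ZMod m), (0 : ZMod m)) then 0
      else Finsupp.single (i ⟨sv, by omega⟩, i ⟨sv + 1, by omega⟩) 1

section qBoundary

variable {m : ℕ} (f : ZMod m × ZMod m → ZMod m)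

lemma qBoundary_zero : qBoundary m f 0 = 0 :=
  Finsupp.sum_zero_index

lemma qBoundary_add (u v : (ZMod m × ZMod m) →₀ ℕ) :
    qBoundary m f (u + v) = qBoundary m f u + qBoundary m f v :=
  Finsupp.sum_add_index' (fun _ => by split_ifs <;> simp)
    (fun _ _ _ => by split_ifs <;> simp [Finsupp.single_add])

lemma qBoundary_ite_single_one {q : ZMod m × ZMod m} (hf : f 0 = 0) :
    qBoundary m f (if q = 0 then 0 else Finsupp.single q 1) =
      if f q = 0 then 0 else Finsupp.single (f q) 1 := by
  split_ifs with hq hfq hfq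
  · exact qBoundary_zero f
  · exact absurd (hq ▸ hf) hfq
  all_goals exact (Finsupp.sum_single_index (by simp)).trans (by simp [hfq])

lemma mem_support_qBoundary {u : (ZMod m × ZMod m) →₀ ℕ} {v : ZMod m} :
    v ∈ (qBoundary m f u).support ↔ v ≠ 0 ∧ ∃ p ∈ u.support, f p = v := by
  simp only [qBoundary, Finsupp.sum, Finsupp.mem_support_iff, Finsupp.finsetSum_apply, ne_eq,
    Finset.sum_eq_zero_iff, not_forall, apply_ite (fun g : ZMod m →₀ ℕ => g v),
    Finsupp.single_apply, Finsupp.coe_zero, Pi.zero_apply]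
  constructor
  · rintro ⟨p, hp, hne⟩
    split_ifs at hne with h0 hv
    exacts [absurd rfl hne, ⟨hv ▸ h0, p, hp, hv⟩, absurd rfl hne]
  · rintro ⟨hv, p, hp, rfl⟩
    exact ⟨p, hp, by simpa [hv] using hp⟩

end qBoundary

section embQ

variable {m a b : ℕ}

def slotPair (i : Fin (a + b - 1) → ZMod m) (s : Fin (a + b - 2)) : ZMod m × ZMod m :=
  (i ⟨s, by omega⟩, i ⟨s + 1, by omega⟩)

lemma embQ_apply (i : Fin (a + b - 1) → ZMod m) (s : Fin (a + b - 2)) :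
    embQ m a b i s = if slotPair i s = 0 then 0 else Finsupp.single (slotPair i s) 1 :=
  rfl

lemma embQ_eq_add_of_eq_zero (i : Fin (a + b - 1) → ZMod m) (t : Fin (a + b - 1))
    (ht : i t = 0) :
    embQ m a b i =
      embQ m a b (fun j => if j < t then i j else 0) +
        embQ m a b (fun j => if t < j then i j else 0) := by
  set lower : Fin (a + b - 1) → ZMod m := fun j => if j < t then i j else 0
  set upper : Fin (a + b - 1) → ZMod m := fun j => if t < j then i j else 0
  have lower_of_le : ∀ j (hj : j < a + b - 1), j ≤ t → lower ⟨j, hj⟩ = i ⟨j, hj⟩ :=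
    fun j hj hjt => by
      rcases hjt.lt_or_eq with hjt | hjt
      · exact if_pos hjt
      · rw [show (⟨j, hj⟩ : Fin _) = t from Fin.ext hjt, ht]
        exact if_neg (lt_irrefl t)
  have lower_of_ge : ∀ j (hj : j < a + b - 1), t ≤ j → lower ⟨j, hj⟩ = 0 :=
    fun j hj hjt => if_neg (not_lt_of_ge hjt)
  have upper_of_ge : ∀ j (hj : j < a + b - 1), t ≤ j → upper ⟨j, hj⟩ = i ⟨j, hj⟩ :=
    fun j hj hjt => by
      rcases hjt.lt_or_eq with hjt | hjt
      · exact if_pos hjt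
      · rw [show (⟨j, hj⟩ : Fin _) = t from Fin.ext hjt.symm, ht]
        exact if_neg (lt_irrefl t)
  have upper_of_le : ∀ j (hj : j < a + b - 1), j ≤ t → upper ⟨j, hj⟩ = 0 :=
    fun j hj hjt => if_neg (not_lt_of_ge hjt)
  funext s
  rw [Pi.add_apply, embQ_apply, embQ_apply, embQ_apply]
  rcases lt_or_ge (s : ℕ) t with hs | hs
  · have hlower : slotPair lower s = slotPair i s := by
      rw [slotPair, lower_of_le _ _ hs.le, lower_of_le _ _ hs, slotPair]
    have hupper : slotPair upper s = 0 := by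
      rw [slotPair, upper_of_le _ _ hs.le, upper_of_le _ _ hs, Prod.mk_zero_zero]
    simp [hlower, hupper]
  · have hlower : slotPair lower s = 0 := by
      rw [slotPair, lower_of_ge _ _ hs, lower_of_ge _ _ (hs.trans (Nat.le_succ _)),
        Prod.mk_zero_zero]
    have hupper : slotPair upper s = slotPair i s := by
      rw [slotPair, upper_of_ge _ _ hs, upper_of_ge _ _ (hs.trans (Nat.le_succ _)), slotPair]
    simp [hlower, hupper]

end embQ

section Qab

variable {m a b : ℕ}

def LabelsValid (x : BigM m a b) : Prop :=
  ∀ s : Fin (a + b - 2), ∀ p ∈ (x s).support, validPairQ m a b s p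

def BoundariesMatch (x : BigM m a b) : Prop :=
  ∀ (s : ℕ) (hs : s + 1 < a + b - 2),
    qBoundary m Prod.snd (x ⟨s, Nat.lt_of_succ_lt hs⟩) = qBoundary m Prod.fst (x ⟨s + 1, hs⟩)

lemma validPairQ_slotPair_of_mem_Xab {i : Fin (a + b - 1) → ZMod m} (hi : i ∈ Xab m a b)
    (s : Fin (a + b - 2)) (hs : slotPair i s ≠ 0) : validPairQ m a b s (slotPair i s) := by
  obtain ⟨h0, hl, hfirst, hlast, hdiff⟩ := hi
  obtain ⟨s, hs'⟩ := s
  refine ⟨hs, (hdiff s _).1, (hdiff s _).2, fun hs0 => ?_, fun hs3 => ?_⟩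
  · subst hs0
    exact hfirst
  · simp only [slotPair]
    convert hlast using 3
    simp only at hs3
    omega

lemma mem_Xab_of_validPairQ_slotPair {i : Fin (a + b - 1) → ZMod m} (hn : 0 < a + b - 2)
    (hi : ∀ s, slotPair i s ≠ 0 → validPairQ m a b s (slotPair i s)) : i ∈ Xab m a b := by
  have hslot (s : Fin (a + b - 2)) : slotPair i s = 0 ∨ validPairQ m a b s (slotPair i s) :=
    (em _).imp_right (hi s)
  refine ⟨by omega, by omega, ?_, ?_, fun k hk => ?_⟩
  · rcases hslot ⟨0, hn⟩ with h | h
    · simp [show i ⟨0, _⟩ = 0 from congrArg Prod.fst h]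
    · exact h.2.2.2.1 rfl
  · rcases hslot ⟨a + b - 3, by omega⟩ with h | h
    · have : i ⟨a + b - 3 + 1, _⟩ = 0 := congrArg Prod.snd h
      simp [show a + b - 2 = a + b - 3 + 1 by omega, this]
    · have hlast := h.2.2.2.2 rfl
      simp only [slotPair] at hlast
      convert hlast using 3
      omega
  · rcases hslot ⟨k, by omega⟩ with h | h
    · simp [show i ⟨k, _⟩ = 0 from congrArg Prod.fst h,
        show i ⟨k + 1, _⟩ = 0 from congrArg Prod.snd h]
    · exact ⟨h.2.1, h.2.2.1⟩

lemma labelsValid_embQ {i : Fin (a + b - 1) → ZMod m} (hi : i ∈ Xab m a b) :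
    LabelsValid (embQ m a b i) := by
  intro s p hp
  rw [embQ_apply] at hp
  split_ifs at hp with hs
  · simp at hp
  · rw [Finsupp.mem_support_single] at hp
    exact hp.1 ▸ validPairQ_slotPair_of_mem_Xab hi s hs

lemma boundariesMatch_embQ (i : Fin (a + b - 1) → ZMod m) : BoundariesMatch (embQ m a b i) := by
  intro s hs
  rw [embQ_apply, embQ_apply, qBoundary_ite_single_one _ rfl,
    qBoundary_ite_single_one _ rfl]
  rfl

lemma embQ_le_of_slotPair {i : Fin (a + b - 1) → ZMod m} {x : BigM m a b}
    (h : ∀ s, slotPair i s = 0 ∨ slotPair i s ∈ (x s).support) : embQ m a b i ≤ x := by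
  intro s
  rw [embQ_apply]
  split_ifs with hs
  · exact zero_le
  · exact Finsupp.single_le_iff.2 (Nat.one_le_iff_ne_zero.2
      (Finsupp.mem_support_iff.1 ((h s).resolve_left hs)))

lemma LabelsValid.of_le {x y : BigM m a b} (hx : LabelsValid x) (hyx : y ≤ x) :
    LabelsValid y :=
  fun s p hp => hx s p (Finsupp.support_mono (hyx s) hp)

lemma BoundariesMatch.tsub {x e : BigM m a b} (hx : BoundariesMatch x) (he : BoundariesMatch e)
    (hex : e ≤ x) : BoundariesMatch (x - e) := by
  intro s hs
  have hsplit (s) : x s = (x - e) s + e s := (tsub_add_cancel_of_le (hex s)).symm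
  have key := hx s hs
  rw [hsplit, hsplit ⟨s + 1, hs⟩, qBoundary_add, qBoundary_add, he s hs] at key
  exact add_right_cancel key

end Qab

section Strings

variable {m a b : ℕ}

/-- A string of `x` from slot `s`, with entries indexed by position in `ℕ`: slot `k` carries the
pair `(i k, i (k + 1))`. -/
structure IsStringIn (x : BigM m a b) (s : ℕ) (i : ℕ → ZMod m) : Prop where
  eq_zero_of_lt : ∀ j < s, i j = 0
  succ_eq_zero_of_eq_zero : ∀ k, s < k → i k = 0 → i (k + 1) = 0
  mem_support : ∀ k (hk : k < a + b - 2), s ≤ k →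
    (i k, i (k + 1)) = 0 ∨ (i k, i (k + 1)) ∈ (x ⟨k, hk⟩).support

lemma IsStringIn.ordConnected_support {x : BigM m a b} {s : ℕ} {i : ℕ → ZMod m}
    (h : IsStringIn x s i) : (Function.support i).OrdConnected := by
  refine ⟨fun j hj l hl k ⟨hjk, hkl⟩ => ?_⟩
  change i k ≠ 0
  intro hk
  have hsj : s ≤ j := not_lt.1 fun hjs => hj (h.eq_zero_of_lt j hjs)
  have hsk : s < k := lt_of_le_of_lt hsj (lt_of_le_of_ne hjk fun hjk => hj (hjk ▸ hk))
  have vanish : ∀ l', k ≤ l' → i l' = 0 := fun l' hkl' => by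
    induction l', hkl' using Nat.le_induction with
    | base => exact hk
    | succ l' hkl' ih => exact h.succ_eq_zero_of_eq_zero l' (hsk.trans_le hkl') ih
  exact hl (vanish l hkl)

theorem exists_isStringIn {x : BigM m a b} (hx : BoundariesMatch x) (s : ℕ)
    (hs : s < a + b - 2) (p : ZMod m × ZMod m) (hp : p ∈ (x ⟨s, hs⟩).support) :
    ∃ i : ℕ → ZMod m, i s = p.1 ∧ i (s + 1) = p.2 ∧ IsStringIn x s i := by
  by_cases hstop : p.2 = 0 ∨ a + b - 2 ≤ s + 1
  · refine ⟨fun j => if j = s then p.1 else if j = s + 1 then p.2 else 0, by simp, by simp,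
      ⟨fun j hj => ?_, fun k hk hk0 => ?_, fun k hk hsk => ?_⟩⟩
    · simp [hj.ne, (hj.trans (Nat.lt_succ_self s)).ne]
    · simp only [show k + 1 ≠ s by omega, show k + 1 ≠ s + 1 by omega, if_false]
    · rcases hsk.eq_or_lt with rfl | hsk
      · exact Or.inr (by simpa using hp)
      · left
        have hk' : k = s + 1 → p.2 = 0 := fun hks => hstop.resolve_right (by omega)
        simp only [show k ≠ s by omega, show k + 1 ≠ s by omega, show k + 1 ≠ s + 1 by omega,
          if_false, Prod.mk_eq_zero, and_true]
        split_ifs with hks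
        exacts [hk' hks, rfl]
  rw [not_or, not_le] at hstop
  obtain ⟨hp2, hs1⟩ := hstop
  obtain ⟨q, hq, hqp⟩ : ∃ q ∈ (x ⟨s + 1, hs1⟩).support, q.1 = p.2 := by
    have hmem := (mem_support_qBoundary Prod.snd).2 ⟨hp2, p, hp, rfl⟩
    rw [hx s hs1] at hmem
    exact ((mem_support_qBoundary Prod.fst).1 hmem).2
  obtain ⟨i, hi1, hi2, hi⟩ := exists_isStringIn hx (s + 1) hs1 q hq
  refine ⟨Function.update i s p.1, by simp, by simp [hi1, hqp],
    ⟨fun j hj => ?_, fun k hk hk0 => ?_, fun k hk hsk => ?_⟩⟩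
  · rw [Function.update_of_ne hj.ne]
    exact hi.eq_zero_of_lt j (by omega)
  · rw [Function.update_of_ne (by omega)] at hk0 ⊢
    rcases (Nat.succ_le_of_lt hk).eq_or_lt with rfl | hk
    · exact (hp2 ((hi1.trans hqp).symm.trans hk0)).elim
    · exact hi.succ_eq_zero_of_eq_zero k hk hk0
  · rcases hsk.eq_or_lt with rfl | hsk
    · right
      simpa [hi1, hqp] using hp
    · rw [Function.update_of_ne (by omega), Function.update_of_ne (by omega)]
      exact hi.mem_support k hk hsk
termination_by a + b - 2 - s

end Strings

section Generation

variable {m a b : ℕ}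

lemma IsStringIn.slotPair_eq_zero_or_mem {x : BigM m a b} {s : ℕ} {i : ℕ → ZMod m}
    (h : IsStringIn x s i) (hleft : s ≠ 0 → i s = 0) (k : Fin (a + b - 2)) :
    slotPair (fun j : Fin (a + b - 1) => i j) k = 0 ∨
      slotPair (fun j : Fin (a + b - 1) => i j) k ∈ (x k).support := by
  obtain ⟨k, hk⟩ := k
  rcases lt_or_ge k s with hks | hks
  · left
    refine Prod.ext (h.eq_zero_of_lt k hks) ?_
    rcases (Nat.succ_le_of_lt hks).eq_or_lt with hks | hks
    · exact (congrArg i hks).trans (hleft (by omega))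
    · exact h.eq_zero_of_lt (k + 1) hks
  · exact h.mem_support k hk hks

lemma exists_mem_support_of_ne_zero {x : BigM m a b} (hb : BoundariesMatch x) (hx0 : x ≠ 0) :
    ∃ s, ∃ hs : s < a + b - 2, ∃ p ∈ (x ⟨s, hs⟩).support, s ≠ 0 → p.1 = 0 := by
  have hex : ∃ s, ∃ hs : s < a + b - 2, x ⟨s, hs⟩ ≠ 0 := by
    obtain ⟨⟨s, hs⟩, hxs⟩ := Function.ne_iff.1 hx0
    exact ⟨s, hs, hxs⟩
  set s := Nat.find hex
  obtain ⟨hs, hxs⟩ : ∃ hs : s < a + b - 2, x ⟨s, hs⟩ ≠ 0 := Nat.find_spec hex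
  obtain ⟨p, hp⟩ := Finsupp.support_nonempty_iff.2 hxs
  refine ⟨s, hs, p, hp, fun hs0 => not_not.1 fun hp1 => ?_⟩
  have hmem := (mem_support_qBoundary Prod.fst).2 ⟨hp1, p, hp, rfl⟩
  have hprev := hb (s - 1) (by omega)
  have hempty : x ⟨s - 1, by omega⟩ = 0 :=
    not_not.1 fun hx => Nat.find_min hex (show s - 1 < s by omega) ⟨_, hx⟩
  rw [hempty, qBoundary_zero] at hprev
  rw [show (⟨s, hs⟩ : Fin (a + b - 2)) = ⟨s - 1 + 1, by omega⟩ from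
    Fin.ext (show s = s - 1 + 1 by omega), ← hprev] at hmem
  simp at hmem

theorem exists_embQ_le_of_ne_zero {x : BigM m a b} (hv : LabelsValid x)
    (hb : BoundariesMatch x) (hx0 : x ≠ 0) :
    ∃ i ∈ Yab m a b, embQ m a b i ≠ 0 ∧ embQ m a b i ≤ x := by
  obtain ⟨s, hs, p, hp, hp1⟩ := exists_mem_support_of_ne_zero hb hx0
  obtain ⟨i, hi1, hi2, hi⟩ := exists_isStringIn hb s hs p hp
  have hslot := hi.slotPair_eq_zero_or_mem fun hs0 => hi1.trans (hp1 hs0)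
  refine ⟨fun j => i j, ⟨mem_Xab_of_validPairQ_slotPair (by omega) fun k hk => ?_, ?_⟩, ?_,
    embQ_le_of_slotPair hslot⟩
  · exact hv k _ ((hslot k).resolve_left hk)
  · intro j k l hjk hkl hj hl
    exact (hi.ordConnected_support.preimage_mono Fin.val_strictMono.monotone).out hj hl
      ⟨hjk, hkl⟩
  · intro hzero
    have hslot_s := congrFun hzero ⟨s, hs⟩
    have hp0 : slotPair (fun j : Fin (a + b - 1) => i j) ⟨s, hs⟩ = p := Prod.ext hi1 hi2
    rw [embQ_apply, hp0, if_neg (show p ≠ 0 from (hv _ p hp).1), Pi.zero_apply] at hslot_s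
    exact one_ne_zero (Finsupp.single_eq_zero.1 hslot_s)

theorem mem_closure_embQ_Yab {x : BigM m a b} (hv : LabelsValid x) (hb : BoundariesMatch x) :
    x ∈ AddSubmonoid.closure (embQ m a b '' Yab m a b) := by
  induction x using WellFoundedLT.induction with
  | _ x ih =>
  by_cases hx0 : x = 0
  · exact hx0 ▸ AddSubmonoid.zero_mem _
  obtain ⟨i, hi, hi0, hix⟩ := exists_embQ_le_of_ne_zero hv hb hx0
  have hsplit : x = x - embQ m a b i + embQ m a b i := (tsub_add_cancel_of_le hix).symm
  have hlt : x - embQ m a b i < x := by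
    conv_rhs => rw [hsplit]
    exact lt_add_of_pos_right _ (lt_of_le_of_ne zero_le (Ne.symm hi0))
  rw [hsplit]
  exact AddSubmonoid.add_mem _
    (ih _ hlt (hv.of_le tsub_le_self) (hb.tsub (boundariesMatch_embQ i) hix))
    (AddSubmonoid.subset_closure ⟨i, hi, rfl⟩)

end Generation

/-- In `Q(a,b)`, every generator with a zero entry at some position
`t` factors as the sum of its truncation up to `t` and its truncation after `t`;
consequently `Q(a,b)` is generated by the tuples of `Y_{a,b}`, those whose nonzero
entries form an unbroken string. -/
theorem Qab_generated_by_unbroken_strings (m a b : ℕ)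
    (Qab : AddSubmonoid (BigM m a b))
    (hQab : (Qab : Set (BigM m a b)) =
      {x | (∀ s : Fin (a + b - 2), ∀ p ∈ (x s).support, validPairQ m a b s p) ∧
        ∀ (s : ℕ) (hs : s + 1 < a + b - 2),
          qBoundary m Prod.snd (x ⟨s, by omega⟩)
            = qBoundary m Prod.fst (x ⟨s + 1, hs⟩)}) :
    (∀ i ∈ Xab m a b, ∀ t : Fin (a + b - 1), i t = 0 →
      embQ m a b i =
        embQ m a b (fun j => if j < t then i j else 0) +
        embQ m a b (fun j => if t < j then i j else 0)) ∧
    AddSubmonoid.closure (embQ m a b '' Yab m a b) = Qab := by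
  refine ⟨fun i _ t ht => embQ_eq_add_of_eq_zero i t ht, le_antisymm ?_ fun x hx => ?_⟩
  · rw [AddSubmonoid.closure_le, hQab]
    rintro _ ⟨i, hi, rfl⟩
    exact ⟨labelsValid_embQ hi.1, boundariesMatch_embQ i⟩
  · rw [← SetLike.mem_coe, hQab] at hx
    exact mem_closure_embQ_Yab hx.1 hx.2
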